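/- arXiv:2306.06883 — 8 statements merged into one kernel-verified Lean document; each statement's English description precedes it below -/
import Mathlib

section
/- For x ∈ [0,1] and positive integers m ≤ n-1, the polynomial L_n^{(m)}(x) := (1-x)^n \sum_{j=0}^{m} \binom{n-1+j}{j} x^j equals 1 - n \binom{n+m}{m} x^{m+1} \sum_{l=0}^{n-1} \binom{n-1}{l} \frac{(-x)^l}{m+l+1}. -/
/-!
Both sides equal `1` at `x = 0` and have the same derivative
`-n (n+m choose m) x^m (1-x)^(n-1)`. For the left side this follows from
`(1-x) ∑_{i<m} C(n+i, i) x^i = ∑_{j≤m} C(n-1+j, j) x^j - C(n+m, m) x^m` (Pascal's rule);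
for the right side it is the binomial expansion of `(1-x)^(n-1)`, integrated termwise.
So `1 - L_n^{(m)}(x)` is a multiple of an incomplete beta integral.
-/

open Finset

theorem succ_mul_choose_succ (k i : ℕ) :
    (i + 1) * (k + (i + 1)).choose (i + 1) = (k + 1) * (k + 1 + i).choose i := by
  have h := Nat.choose_succ_right_eq (k + 1 + i) i
  rw [show k + 1 + i - i = k + 1 by omega, show k + 1 + i = k + (i + 1) by omega] at h
  rw [mul_comm, h, mul_comm, show k + (i + 1) = k + 1 + i by omega]

theorem hasDerivAt_sum_choose_mul_pow (k m : ℕ) (y : ℝ) :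
    HasDerivAt (fun y : ℝ => ∑ j ∈ range (m + 1), ((k + j).choose j : ℝ) * y ^ j)
      ((k + 1) * ∑ i ∈ range m, ((k + 1 + i).choose i : ℝ) * y ^ i) y := by
  refine (HasDerivAt.fun_sum fun j _ => (hasDerivAt_pow j y).const_mul _).congr_deriv ?_
  rw [sum_range_succ', mul_sum]
  simp only [Nat.cast_zero, zero_mul, mul_zero, add_zero, Nat.add_sub_cancel]
  refine sum_congr rfl fun i _ => ?_
  have h := congrArg (Nat.cast (R := ℝ)) (succ_mul_choose_succ k i)
  push_cast at h ⊢
  linear_combination y ^ i * h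

theorem one_sub_mul_sum_choose_mul_pow (k m : ℕ) (x : ℝ) :
    (1 - x) * ∑ i ∈ range m, ((k + 1 + i).choose i : ℝ) * x ^ i
      = ∑ j ∈ range (m + 1), ((k + j).choose j : ℝ) * x ^ j
        - ((k + 1 + m).choose m : ℝ) * x ^ m := by
  induction m with
  | zero => simp
  | succ m ih =>
    have pascal : (k + 1 + (m + 1)).choose (m + 1)
        = (k + 1 + m).choose m + (k + (m + 1)).choose (m + 1) := by
      rw [show k + 1 + (m + 1) = k + 1 + m + 1 by omega, Nat.choose_succ_succ',
        show k + 1 + m = k + (m + 1) by omega]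
    rw [sum_range_succ, sum_range_succ _ (m + 1), pascal]
    push_cast
    linear_combination ih

theorem hasDerivAt_one_sub_pow_mul_sum_choose_mul_pow (k m : ℕ) (y : ℝ) :
    HasDerivAt
      (fun y : ℝ => (1 - y) ^ (k + 1) * ∑ j ∈ range (m + 1), ((k + j).choose j : ℝ) * y ^ j)
      (-((k + 1) * ((k + 1 + m).choose m : ℝ)) * (y ^ m * (1 - y) ^ k)) y := by
  have h := (((hasDerivAt_id y).const_sub 1).fun_pow (k + 1)).mul
    (hasDerivAt_sum_choose_mul_pow k m y)
  refine h.congr_deriv ?_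
  have := one_sub_mul_sum_choose_mul_pow k m y
  simp only [id, Nat.add_sub_cancel, Nat.cast_add, Nat.cast_one] at h ⊢
  linear_combination ((k : ℝ) + 1) * (1 - y) ^ k * this

theorem one_sub_pow_eq_sum_choose_mul_neg_pow (k : ℕ) (y : ℝ) :
    (1 - y) ^ k = ∑ l ∈ range (k + 1), (k.choose l : ℝ) * (-y) ^ l := by
  rw [sub_eq_neg_add, add_pow]
  simp only [one_pow, mul_one, mul_comm]

theorem hasDerivAt_pow_mul_sum_choose_mul_neg_pow_div (k m : ℕ) (y : ℝ) :
    HasDerivAt (fun y : ℝ => y ^ (m + 1) *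
        ∑ l ∈ range (k + 1), (k.choose l : ℝ) * (-y) ^ l / (m + l + 1))
      (y ^ m * (1 - y) ^ k) y := by
  have termwise : ∀ z : ℝ, z ^ (m + 1) *
      ∑ l ∈ range (k + 1), (k.choose l : ℝ) * (-z) ^ l / (m + l + 1)
      = ∑ l ∈ range (k + 1), (k.choose l : ℝ) * (-1) ^ l / (m + l + 1) * z ^ (m + l + 1) := by
    intro z
    rw [mul_sum]
    refine sum_congr rfl fun l _ => ?_
    rw [neg_pow]
    ring
  simp only [termwise]
  refine (HasDerivAt.fun_sum fun l _ => (hasDerivAt_pow (m + l + 1) y).const_mul _).congr_deriv ?_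
  rw [one_sub_pow_eq_sum_choose_mul_neg_pow, mul_sum]
  refine sum_congr rfl fun l _ => ?_
  have hne : (m : ℝ) + l + 1 ≠ 0 := by positivity
  rw [neg_pow, Nat.add_sub_cancel]
  push_cast
  field_simp
  ring

theorem eq_of_hasDerivAt_eq {f g f' : ℝ → ℝ} (hf : ∀ y, HasDerivAt f (f' y) y)
    (hg : ∀ y, HasDerivAt g (f' y) y) {a : ℝ} (hfga : f a = g a) : f = g :=
  eq_of_fderiv_eq (fun y => (hf y).differentiableAt) (fun y => (hg y).differentiableAt)
    (fun y => by rw [(hf y).hasFDerivAt.fderiv, (hg y).hasFDerivAt.fderiv]) a hfga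

theorem one_sub_pow_succ_mul_sum_choose_mul_pow (k m : ℕ) (x : ℝ) :
    (1 - x) ^ (k + 1) * ∑ j ∈ range (m + 1), ((k + j).choose j : ℝ) * x ^ j
      = 1 - ((k + 1) * ((k + 1 + m).choose m : ℝ)) * x ^ (m + 1) *
          ∑ l ∈ range (k + 1), (k.choose l : ℝ) * (-x) ^ l / (m + l + 1) := by
  set c : ℝ := (k + 1) * ((k + 1 + m).choose m : ℝ)
  have hasDerivAt_rhs : ∀ y : ℝ, HasDerivAt (fun y : ℝ => 1 - c * (y ^ (m + 1) *
      ∑ l ∈ range (k + 1), (k.choose l : ℝ) * (-y) ^ l / (m + l + 1)))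
      (-c * (y ^ m * (1 - y) ^ k)) y := fun y =>
    (((hasDerivAt_pow_mul_sum_choose_mul_neg_pow_div k m y).const_mul c).const_sub 1).congr_deriv
      (by ring)
  have key := eq_of_hasDerivAt_eq (hasDerivAt_one_sub_pow_mul_sum_choose_mul_pow k m)
    hasDerivAt_rhs (a := 0) (by simp [sum_range_succ'])
  simpa only [mul_assoc] using congrFun key x

theorem stmt_3_general (n m : ℕ) (hn : 1 ≤ n)
    (x : ℝ) :
    (1 - x) ^ n * ∑ j ∈ Finset.range (m + 1), ((n - 1 + j).choose j : ℝ) * x ^ j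
      = 1 - (n : ℝ) * ((n + m).choose m : ℝ) * x ^ (m + 1) *
          ∑ l ∈ Finset.range n, ((n - 1).choose l : ℝ) * (-x) ^ l / (m + l + 1) := by
  obtain ⟨k, rfl⟩ : ∃ k, n = k + 1 := ⟨n - 1, by omega⟩
  simpa using one_sub_pow_succ_mul_sum_choose_mul_pow k m x

theorem stmt_3 (n m : ℕ) (hm : 1 ≤ m) (hn : 1 ≤ n) (hmn : m ≤ n - 1)
    (x : ℝ) (hx : x ∈ Set.Icc (0:ℝ) 1) :
    (1 - x) ^ n * ∑ j ∈ Finset.range (m + 1), ((n - 1 + j).choose j : ℝ) * x ^ j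
      = 1 - (n : ℝ) * ((n + m).choose m : ℝ) * x ^ (m + 1) *
          ∑ l ∈ Finset.range n, ((n - 1).choose l : ℝ) * (-x) ^ l / (m + l + 1) :=
  stmt_3_general n m hn x
end

section
/- Define I_n(x) := \frac{(1-x)^n}{n} \sum_{j=0}^{n-1} (n-j) \binom{n-1+j}{j} x^j for x ∈ (0,1/2) and n ≥ 1. Then for all n ≥ 1, I_{n+1}(x) - I_n(x) = - x^{n+1} (1-x)^n \frac{1}{n+1}\binom{2n}{n}. -/
/-!
Dividing the `j`-th coefficient of `I_d` by `d` gives the ballot number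
`(d - j) / d * C(d - 1 + j, j)`, and these numbers form the Catalan triangle:
`b (n+1) (j+1) = b (n+1) j + b n (j+1)`. Multiplying `∑ b (n+1) j x^j` by `1 - x` therefore
telescopes to `∑ b n j x^j` up to the top term `b (n+1) n x^(n+1) = C(2n, n) / (n+1) x^(n+1)`.
-/

open Finset

theorem one_sub_mul_sum_range_succ {R : Type*} [CommRing R] (u : ℕ → R) (x : R) (n : ℕ) :
    (1 - x) * ∑ j ∈ range (n + 1), u j * x ^ j =
      u 0 + ∑ j ∈ range n, (u (j + 1) - u j) * x ^ (j + 1) - u n * x ^ (n + 1) := by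
  induction n with
  | zero => rw [sum_range_one, sum_range_zero]; ring
  | succ n ih => rw [sum_range_succ, mul_add, ih, sum_range_succ]; ring

noncomputable def ballot (d j : ℕ) : ℝ := ((d - j : ℕ) : ℝ) * ((d - 1 + j).choose j : ℝ) / d

theorem ballot_zero_right {d : ℕ} (hd : 1 ≤ d) : ballot d 0 = 1 := by
  have : (d : ℝ) ≠ 0 := Nat.cast_ne_zero.mpr (by omega)
  simp [ballot, this]

theorem ballot_self (d : ℕ) : ballot d d = 0 := by
  simp [ballot]

theorem ballot_succ_self (n : ℕ) : ballot (n + 1) n = ((2 * n).choose n : ℝ) / (n + 1) := by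
  rw [ballot, show n + 1 - n = 1 by omega, show n + 1 - 1 + n = 2 * n by omega]
  push_cast
  ring

theorem ballot_succ_succ {n j : ℕ} (hj : j < n) :
    ballot (n + 1) (j + 1) = ballot (n + 1) j + ballot n (j + 1) := by
  have pascal : ((n + j + 1).choose (j + 1) : ℝ) = (n + j).choose j + (n + j).choose (j + 1) := by
    exact_mod_cast Nat.choose_succ_succ (n + j) j
  have absorb : ((n + j).choose (j + 1) : ℝ) * (j + 1) = (n + j).choose j * n := by
    have := Nat.choose_succ_right_eq (n + j) j
    rw [Nat.add_sub_cancel] at this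
    exact_mod_cast this
  have hn : (n : ℝ) ≠ 0 := Nat.cast_ne_zero.mpr (by omega)
  simp only [ballot]
  rw [show n + 1 - (j + 1) = n - j by omega, show n - 1 + (j + 1) = n + j by omega,
    show n + 1 - 1 + (j + 1) = n + j + 1 by omega, show n + 1 - 1 + j = n + j by omega,
    Nat.cast_sub hj.le, Nat.cast_sub hj, Nat.cast_sub (by omega : j ≤ n + 1), pascal]
  push_cast
  field_simp
  linear_combination absorb

theorem one_sub_mul_sum_ballot_succ (x : ℝ) {n : ℕ} (hn : 1 ≤ n) :
    (1 - x) * ∑ j ∈ range (n + 1), ballot (n + 1) j * x ^ j =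
      ∑ j ∈ range n, ballot n j * x ^ j - (2 * n).choose n / (n + 1) * x ^ (n + 1) := by
  have telescoped : ∑ j ∈ range n, (ballot (n + 1) (j + 1) - ballot (n + 1) j) * x ^ (j + 1) =
      ∑ j ∈ range n, ballot n (j + 1) * x ^ (j + 1) :=
    sum_congr rfl fun j hj => by rw [ballot_succ_succ (mem_range.mp hj)]; ring
  have shifted : ∑ j ∈ range n, ballot n j * x ^ j =
      ballot n 0 + ∑ j ∈ range n, ballot n (j + 1) * x ^ (j + 1) := by
    have := sum_range_succ' (fun j => ballot n j * x ^ j) n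
    rw [sum_range_succ, ballot_self, zero_mul, add_zero, pow_zero, mul_one] at this
    rw [this, add_comm]
  rw [one_sub_mul_sum_range_succ, telescoped, shifted, ballot_succ_self,
    ballot_zero_right hn, ballot_zero_right (by omega)]

theorem stmt_6_general (x : ℝ) (n : ℕ) (hn : 1 ≤ n)
    (I : ℕ → ℝ)
    (hI : ∀ d, 1 ≤ d → I d = (1 - x) ^ d / (d : ℝ) *
        ∑ j ∈ Finset.range d, ((d - j : ℕ) : ℝ) * ((d - 1 + j).choose j : ℝ) * x ^ j) :
    I (n + 1) - I n = -(x ^ (n + 1) * (1 - x) ^ n * ((2 * n).choose n : ℝ) / ((n : ℝ) + 1)) := by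
  have hI_ballot : ∀ d, 1 ≤ d → I d = (1 - x) ^ d * ∑ j ∈ range d, ballot d j * x ^ j := by
    intro d hd
    rw [hI d hd, mul_sum, mul_sum]
    exact sum_congr rfl fun j _ => by rw [ballot]; ring
  rw [hI_ballot (n + 1) (by omega), hI_ballot n hn, pow_succ, mul_assoc,
    one_sub_mul_sum_ballot_succ x hn]
  ring

theorem stmt_6 (x : ℝ) (hx : x ∈ Set.Ioo (0:ℝ) (1/2)) (n : ℕ) (hn : 1 ≤ n)
    (I : ℕ → ℝ)
    (hI : ∀ d, 1 ≤ d → I d = (1 - x) ^ d / (d : ℝ) *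
        ∑ j ∈ Finset.range d, ((d - j : ℕ) : ℝ) * ((d - 1 + j).choose j : ℝ) * x ^ j) :
    I (n + 1) - I n = -(x ^ (n + 1) * (1 - x) ^ n * ((2 * n).choose n : ℝ) / ((n : ℝ) + 1)) :=
  stmt_6_general x n hn I hI
end

section
/- For x ∈ (0,1/2) and n ≥ 1, the function I_n(x) := \frac{(1-x)^n}{n} \sum_{j=0}^{n-1} (n-j)\binom{n-1+j}{j} x^j satisfies I_n(x) = \frac{1-2x}{1-x} + x \sum_{n'=n}^{\infty} \frac{1}{n'+1}\binom{2n'}{n'} (x(1-x))^{n'}. -/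
/-!
Write `P k N = ∑_{j<N} C(j+k,k) x^j` for the partial sums of the negative binomial series
`∑_j C(j+k,k) x^j = (1-x)^{-(k+1)}`. The coefficient `(n-j)/n · C(n-1+j,j)` is a ballot number,
equal to `C(n-1+j,j) - C(n-1+j,j-1)`, so `I_{k+1} = (1-x)^{k+1} (P k (k+1) - x P (k+1) k)`.
Pascal's rule in the form `(1-x) P (k+1) N = P k N - C(N+k,k+1) x^N` then yields the telescoping
step `I_n - I_{n+1} = x C(2n,n)/(n+1) (x(1-x))^n`. For `x < 1/2`, bounding `C(m,k) ≤ 2^m` shows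
that the normalised tails `1 - (1-x)^{k+a+1} P (k+a) (k+b)` are `O((4x(1-x))^k)` for fixed `a, b`,
so `I_n → 1 - x/(1-x)`, and summing the telescoping steps gives the identity.
-/

open Finset Filter Topology

theorem hasSum_sub_succ_of_antitone {f : ℕ → ℝ} {L : ℝ} (hf : Antitone f)
    (hL : Tendsto f atTop (𝓝 L)) : HasSum (fun i => f i - f (i + 1)) (f 0 - L) := by
  rw [hasSum_iff_tendsto_nat_of_nonneg fun i => sub_nonneg.2 (hf i.le_succ)]
  simpa only [sum_range_sub'] using tendsto_const_nhds.sub hL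

theorem cast_choose_two_mul_div_succ (m : ℕ) :
    ((2 * m).choose m : ℝ) / (m + 1) = (2 * m).choose m - (2 * m).choose (m + 1) := by
  have h : ((2 * m).choose (m + 1) : ℝ) * (m + 1) = (2 * m).choose m * m := by
    exact_mod_cast (show 2 * m - m = m by omega) ▸ Nat.choose_succ_right_eq (2 * m) m
  field_simp
  linear_combination h

section NegBinom

variable {R : Type*} [CommRing R]

def negBinomPartialSum (x : R) (k N : ℕ) : R :=
  ∑ j ∈ range N, ((j + k).choose k : R) * x ^ j

theorem negBinomPartialSum_succ (x : R) (k N : ℕ) :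
    negBinomPartialSum x k (N + 1) = negBinomPartialSum x k N + ((N + k).choose k : R) * x ^ N :=
  sum_range_succ _ _

theorem one_sub_mul_negBinomPartialSum_succ (x : R) (k N : ℕ) :
    (1 - x) * negBinomPartialSum x (k + 1) N =
      negBinomPartialSum x k N - ((N + k).choose (k + 1) : R) * x ^ N := by
  induction N with
  | zero => simp [negBinomPartialSum]
  | succ N ih =>
    have pascal : ((N + k + 1).choose (k + 1) : R) = (N + k).choose k + (N + k).choose (k + 1) := by
      rw [Nat.choose_succ_succ', Nat.cast_add]
    simp only [negBinomPartialSum_succ]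
    rw [add_right_comm N 1 k]
    linear_combination ih + x ^ N * pascal

theorem mul_negBinomPartialSum_succ (x : R) (k N : ℕ) :
    x * negBinomPartialSum x (k + 1) N =
      ∑ j ∈ range (N + 1), ((j + k).choose (k + 1) : R) * x ^ j := by
  rw [sum_range_succ', negBinomPartialSum, mul_sum]
  simp only [zero_add, Nat.choose_succ_self, Nat.cast_zero, zero_mul, add_zero]
  refine sum_congr rfl fun i _ => ?_
  rw [show i + 1 + k = i + (k + 1) by ring]
  ring

end NegBinom

section NegBinomLimit

variable {x : ℝ}

theorem one_sub_negBinomPartialSum_mem_Icc (hx₀ : 0 ≤ x) (hx : x < 1 / 2) (k N : ℕ) :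
    1 - (1 - x) ^ (k + 1) * negBinomPartialSum x k N ∈
      Set.Icc 0 ((1 - x) ^ (k + 1) * 2 ^ k * (2 * x) ^ N / (1 - 2 * x)) := by
  have hx₁ : 0 < 1 - x := by linarith
  have hx₂ : 0 < 1 - 2 * x := by linarith
  have hs := hasSum_choose_mul_geometric_of_norm_lt_one k (r := x)
    (by rw [Real.norm_of_nonneg hx₀]; linarith)
  have hsplit := hs.summable.sum_add_tsum_nat_add N
  rw [hs.tsum_eq, ← negBinomPartialSum] at hsplit
  set tail := ∑' i, (((i + N + k).choose k : ℕ) : ℝ) * x ^ (i + N)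
  have htail : 1 - (1 - x) ^ (k + 1) * negBinomPartialSum x k N = (1 - x) ^ (k + 1) * tail := by
    have hone : (1 - x) ^ (k + 1) * (negBinomPartialSum x k N + tail) = 1 := by
      rw [hsplit]
      field_simp
    linear_combination -hone
  have hle : tail ≤ 2 ^ k * (2 * x) ^ N / (1 - 2 * x) := by
    have hgeom := (hasSum_geometric_of_lt_one (by positivity) (by linarith : 2 * x < 1)).mul_left
      (2 ^ k * (2 * x) ^ N)
    refine ((summable_nat_add_iff N).2 hs.summable).tsum_le_tsum (fun i => ?_) hgeom.summable
      |>.trans_eq (by rw [hgeom.tsum_eq]; ring)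
    calc (((i + N + k).choose k : ℕ) : ℝ) * x ^ (i + N) ≤ 2 ^ (i + N + k) * x ^ (i + N) := by
          gcongr
          exact_mod_cast Nat.choose_le_two_pow _ _
      _ = 2 ^ k * (2 * x) ^ N * (2 * x) ^ i := by ring
  rw [htail]
  constructor
  · exact mul_nonneg (by positivity) (tsum_nonneg fun i => by positivity)
  · calc (1 - x) ^ (k + 1) * tail ≤ (1 - x) ^ (k + 1) * (2 ^ k * (2 * x) ^ N / (1 - 2 * x)) := by
          gcongr
      _ = _ := by ring

theorem tendsto_negBinomPartialSum (hx₀ : 0 ≤ x) (hx : x < 1 / 2) (a b : ℕ) :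
    Tendsto (fun k => (1 - x) ^ (k + a + 1) * negBinomPartialSum x (k + a) (k + b))
      atTop (𝓝 1) := by
  set C := (1 - x) ^ (a + 1) * 2 ^ a * (2 * x) ^ b / (1 - 2 * x)
  have hq : Tendsto (fun k : ℕ => C * (4 * x * (1 - x)) ^ k) atTop (𝓝 0) := by
    simpa using (tendsto_pow_atTop_nhds_zero_of_lt_one (by nlinarith) (by nlinarith)).const_mul C
  have hpow (k : ℕ) : (4 * x * (1 - x)) ^ k = 2 ^ k * (2 * x) ^ k * (1 - x) ^ k := by
    rw [← mul_pow, ← mul_pow]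
    ring
  have hbounds k := one_sub_negBinomPartialSum_mem_Icc hx₀ hx (k + a) (k + b)
  have hgap := squeeze_zero (fun k => (hbounds k).1)
    (fun k => (hbounds k).2.trans_eq (by rw [hpow]; ring)) hq
  simpa using (tendsto_const_nhds (x := (1 : ℝ))).sub hgap

end NegBinomLimit

/-- The paper's `I_n(x)`. -/
noncomputable def ballotSum (x : ℝ) (n : ℕ) : ℝ :=
  (1 - x) ^ n / n * ∑ j ∈ range n, ((n - j : ℕ) : ℝ) * ((n - 1 + j).choose j : ℝ) * x ^ j

theorem ballotSum_succ_eq (x : ℝ) (k : ℕ) :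
    ballotSum x (k + 1) =
      (1 - x) ^ (k + 1) *
        (negBinomPartialSum x k (k + 1) - x * negBinomPartialSum x (k + 1) k) := by
  have hterm : ∀ j ∈ range (k + 1),
      ((k + 1 - j : ℕ) : ℝ) * ((k + 1 - 1 + j).choose j : ℝ) * x ^ j =
        (k + 1) * (((j + k).choose k : ℝ) * x ^ j - ((j + k).choose (k + 1) : ℝ) * x ^ j) := by
    intro j hj
    have hsucc : ((j + k).choose (k + 1) : ℝ) * (k + 1) = (j + k).choose k * j := by
      exact_mod_cast Nat.add_sub_cancel j k ▸ Nat.choose_succ_right_eq (j + k) k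
    rw [Nat.add_sub_cancel, add_comm k j, Nat.choose_symm_add, Nat.cast_sub (mem_range.1 hj).le]
    push_cast
    linear_combination x ^ j * hsucc
  rw [ballotSum, sum_congr rfl hterm, ← mul_sum, sum_sub_distrib, mul_negBinomPartialSum_succ,
    ← negBinomPartialSum]
  push_cast
  field_simp

theorem ballotSum_sub_ballotSum_succ (x : ℝ) {n : ℕ} (hn : n ≠ 0) :
    ballotSum x n - ballotSum x (n + 1) =
      x * (((2 * n).choose n : ℝ) / (n + 1) * (x * (1 - x)) ^ n) := by
  obtain ⟨k, rfl⟩ : ∃ k, n = k + 1 := ⟨n - 1, by omega⟩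
  have h₁ := one_sub_mul_negBinomPartialSum_succ x k (k + 1 + 1)
  have h₂ := one_sub_mul_negBinomPartialSum_succ x (k + 1) (k + 1)
  have h₃ := negBinomPartialSum_succ x k (k + 1)
  have h₄ := negBinomPartialSum_succ x (k + 1) k
  rw [show k + 1 + 1 + k = 2 * (k + 1) by ring] at h₁
  rw [show k + 1 + (k + 1) = 2 * (k + 1) by ring] at h₂
  rw [show k + 1 + k = 2 * k + 1 by ring] at h₃
  rw [show k + (k + 1) = 2 * k + 1 by ring, Nat.choose_symm_half] at h₄
  rw [ballotSum_succ_eq, ballotSum_succ_eq, cast_choose_two_mul_div_succ, mul_pow]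
  -- the `x ^ (k + 1)` terms cancel because `C(2k+1,k) = C(2k+1,k+1)` (used in `h₄`)
  linear_combination (-(1 - x) ^ (k + 1)) * (h₁ - x * h₂ + h₃ - x * h₄)

theorem ballotSum_succ_le {x : ℝ} (hx₀ : 0 ≤ x) (hx₁ : x ≤ 1) {n : ℕ} (hn : n ≠ 0) :
    ballotSum x (n + 1) ≤ ballotSum x n := by
  have hx : 0 ≤ x * (1 - x) := mul_nonneg hx₀ (sub_nonneg.2 hx₁)
  rw [← sub_nonneg, ballotSum_sub_ballotSum_succ x hn]
  positivity

theorem tendsto_ballotSum {x : ℝ} (hx₀ : 0 ≤ x) (hx : x < 1 / 2) :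
    Tendsto (ballotSum x) atTop (𝓝 ((1 - 2 * x) / (1 - x))) := by
  have hx₁ : 1 - x ≠ 0 := by linarith
  rw [← tendsto_add_atTop_iff_nat 1]
  have h := (tendsto_negBinomPartialSum hx₀ hx 0 1).sub
    ((tendsto_negBinomPartialSum hx₀ hx 1 0).const_mul (x / (1 - x)))
  simp only [add_zero, mul_one] at h
  convert h using 2 with k
  · rw [ballotSum_succ_eq, pow_succ (1 - x) (k + 1)]
    field_simp
  · field_simp
    ring

theorem stmt_7 (x : ℝ) (hx : x ∈ Set.Ioo (0:ℝ) (1/2)) (n : ℕ) (hn : 1 ≤ n) :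
    (1 - x) ^ n / (n : ℝ) *
        ∑ j ∈ Finset.range n, ((n - j : ℕ) : ℝ) * ((n - 1 + j).choose j : ℝ) * x ^ j
      = (1 - 2 * x) / (1 - x) +
        x * ∑' k : ℕ, ((2 * (n + k)).choose (n + k) : ℝ) / ((n : ℝ) + (k : ℝ) + 1) *
          (x * (1 - x)) ^ (n + k) := by
  obtain ⟨hx₀, hx⟩ := hx
  have hanti : Antitone fun k => ballotSum x (n + k) :=
    antitone_nat_of_succ_le fun k =>
      ballotSum_succ_le (n := n + k) hx₀.le (by linarith) (by omega)
  have hsum := hasSum_sub_succ_of_antitone hanti <| by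
    simpa only [add_comm] using (tendsto_add_atTop_iff_nat n).2 (tendsto_ballotSum hx₀.le hx)
  have hterm (k : ℕ) : ballotSum x (n + k) - ballotSum x (n + (k + 1)) =
      x * (((2 * (n + k)).choose (n + k) : ℝ) / ((n : ℝ) + (k : ℝ) + 1) *
        (x * (1 - x)) ^ (n + k)) := by
    rw [← add_assoc, ballotSum_sub_ballotSum_succ x (by omega)]
    push_cast
    ring
  simp only [hterm, add_zero] at hsum
  rw [← tsum_mul_left, hsum.tsum_eq, ballotSum]
  ring
end

section
/- For x ∈ (0,1/2), the limit \lim_{n→∞} \frac{(1-x)^n}{n} \sum_{j=0}^{n-1} (n-j)\binom{n-1+j}{j} x^j = \frac{1-2x}{1-x} holds. -/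
/-!
Write `n = m + 1`. Since `(m + 1 - j) C(m + j, j) = (m + 1) C(m + j, j) - (m + 1) C(m + j, j - 1)`,
the expression equals `(1 - x)^(m+1) (A - x B)`, where `A` and `B` are partial sums (with `m + 1`
and `m` terms) of the negative binomial series `∑ C(j + m, m) x^j = (1 - x)^-(m+1)` and
`∑ C(j + m + 1, m + 1) x^j = (1 - x)^-(m+2)`. With the full series in place of `A` and `B` one gets
exactly `1 - x / (1 - x) = (1 - 2x) / (1 - x)`. The two discarded tails, estimated with
`C(n, k) ≤ 2^n`, contribute `O((4x(1 - x))^m)`, which tends to `0` since `4x(1 - x) < 1` for `x < 1/2`.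
-/

open Filter Finset Topology

noncomputable def negBinomialRemainder (x : ℝ) (k m : ℕ) : ℝ :=
  1 / (1 - x) ^ (k + 1) - ∑ j ∈ range m, ((j + k).choose k : ℝ) * x ^ j

lemma hasSum_negBinomialRemainder {x : ℝ} (hx : |x| < 1) (k m : ℕ) :
    HasSum (fun j ↦ ((j + m + k).choose k : ℝ) * x ^ (j + m)) (negBinomialRemainder x k m) :=
  (hasSum_nat_add_iff' m).2 <| hasSum_choose_mul_geometric_of_norm_lt_one k hx

lemma negBinomialRemainder_nonneg {x : ℝ} (hx0 : 0 ≤ x) (hx1 : x < 1) (k m : ℕ) :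
    0 ≤ negBinomialRemainder x k m :=
  (hasSum_negBinomialRemainder (abs_lt.2 ⟨by linarith, hx1⟩) k m).nonneg fun _ ↦ by positivity

lemma negBinomialRemainder_le {x : ℝ} (hx0 : 0 ≤ x) (hx : 2 * x < 1) (k m : ℕ) :
    negBinomialRemainder x k m ≤ 2 ^ (k + m) * x ^ m / (1 - 2 * x) := by
  have hgeom : HasSum (fun j : ℕ ↦ 2 ^ (k + m) * x ^ m * (2 * x) ^ j)
      (2 ^ (k + m) * x ^ m / (1 - 2 * x)) := by
    simpa [div_eq_mul_inv] using
      (hasSum_geometric_of_lt_one (by positivity) hx).mul_left (2 ^ (k + m) * x ^ m)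
  refine hasSum_le (fun j ↦ ?_)
    (hasSum_negBinomialRemainder (abs_lt.2 ⟨by linarith, by linarith⟩) k m) hgeom
  calc ((j + m + k).choose k : ℝ) * x ^ (j + m)
      ≤ 2 ^ (j + m + k) * x ^ (j + m) := by
        gcongr; exact_mod_cast Nat.choose_le_two_pow _ _
    _ = 2 ^ (k + m) * x ^ m * (2 * x) ^ j := by ring

lemma succ_mul_choose_succ_add (m i : ℕ) :
    (i + 1) * (i + 1 + m).choose m = (m + 1) * (i + (m + 1)).choose (m + 1) := by
  have := Nat.choose_succ_right_eq (i + (m + 1)) m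
  rw [show i + (m + 1) - m = i + 1 by omega] at this
  rw [show i + 1 + m = i + (m + 1) by omega, mul_comm (i + 1), mul_comm (m + 1), this]

lemma sum_range_sub_mul_choose {R : Type*} [CommRing R] (x : R) (m : ℕ) :
    ∑ j ∈ range (m + 1), ((m + 1 - j : ℕ) : R) * ((m + j).choose j : R) * x ^ j =
      (m + 1) * (∑ j ∈ range (m + 1), ((j + m).choose m : R) * x ^ j -
        x * ∑ j ∈ range m, ((j + (m + 1)).choose (m + 1) : R) * x ^ j) := by
  have hweight : ∀ j ∈ range (m + 1),
      ((m + 1 - j : ℕ) : R) * ((m + j).choose j : R) * x ^ j =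
        (m + 1) * (((j + m).choose m : R) * x ^ j) - j * ((j + m).choose m : R) * x ^ j := by
    intro j hj
    rw [Nat.cast_sub (by simp at hj; omega), add_comm m j,
      ← Nat.choose_symm_add]
    push_cast; ring
  rw [sum_congr rfl hweight, sum_sub_distrib, ← mul_sum, mul_sub,
    sum_range_succ' (fun j ↦ (j : R) * _ * _)]
  congr 1
  simp only [Nat.cast_zero, zero_mul, add_zero, mul_sum]
  refine sum_congr rfl fun i _ ↦ ?_
  have := congrArg (Nat.cast : ℕ → R) (succ_mul_choose_succ_add m i)
  push_cast at this ⊢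
  linear_combination x ^ (i + 1) * this

lemma one_sub_pow_div_mul_sum_range_succ {x : ℝ} (hx : x ≠ 1) (m : ℕ) :
    (1 - x) ^ (m + 1) / ((m + 1 : ℕ) : ℝ) *
        ∑ j ∈ range (m + 1), ((m + 1 - j : ℕ) : ℝ) * ((m + 1 - 1 + j).choose j : ℝ) * x ^ j =
      (1 - 2 * x) / (1 - x) - (1 - x) ^ (m + 1) * negBinomialRemainder x m (m + 1) +
        x * (1 - x) ^ (m + 1) * negBinomialRemainder x (m + 1) m := by
  have hx' : 1 - x ≠ 0 := sub_ne_zero.2 hx.symm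
  rw [Nat.add_sub_cancel, sum_range_sub_mul_choose, negBinomialRemainder, negBinomialRemainder]
  push_cast
  field_simp
  ring

lemma one_sub_pow_mul_negBinomialRemainder_le {x : ℝ} (hx0 : 0 ≤ x) (hx : 2 * x < 1) (m : ℕ) :
    (1 - x) ^ (m + 1) * negBinomialRemainder x m (m + 1) ≤
      2 * x * (1 - x) / (1 - 2 * x) * (4 * x * (1 - x)) ^ m := by
  have : 0 ≤ 1 - x := by linarith
  calc (1 - x) ^ (m + 1) * negBinomialRemainder x m (m + 1)
      ≤ (1 - x) ^ (m + 1) * (2 ^ (m + (m + 1)) * x ^ (m + 1) / (1 - 2 * x)) := by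
        gcongr
        exact negBinomialRemainder_le hx0 hx _ _
    _ = 2 * x * (1 - x) / (1 - 2 * x) * (4 * x * (1 - x)) ^ m := by
        rw [mul_pow, mul_pow, show (4 : ℝ) ^ m = 2 ^ (2 * m) by rw [pow_mul]; norm_num]
        ring

lemma mul_one_sub_pow_mul_negBinomialRemainder_le {x : ℝ} (hx0 : 0 ≤ x) (hx : 2 * x < 1)
    (m : ℕ) :
    x * (1 - x) ^ (m + 1) * negBinomialRemainder x (m + 1) m ≤
      2 * x * (1 - x) / (1 - 2 * x) * (4 * x * (1 - x)) ^ m := by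
  have : 0 ≤ 1 - x := by linarith
  calc x * (1 - x) ^ (m + 1) * negBinomialRemainder x (m + 1) m
      ≤ x * (1 - x) ^ (m + 1) * (2 ^ (m + 1 + m) * x ^ m / (1 - 2 * x)) := by
        gcongr
        exact negBinomialRemainder_le hx0 hx _ _
    _ = 2 * x * (1 - x) / (1 - 2 * x) * (4 * x * (1 - x)) ^ m := by
        rw [mul_pow, mul_pow, show (4 : ℝ) ^ m = 2 ^ (2 * m) by rw [pow_mul]; norm_num]
        ring

theorem stmt_9 (x : ℝ) (hx : x ∈ Set.Ioo (0:ℝ) (1/2)) :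
    Filter.Tendsto
      (fun n : ℕ => (1 - x) ^ n / (n : ℝ) *
        ∑ j ∈ Finset.range n, ((n - j : ℕ) : ℝ) * ((n - 1 + j).choose j : ℝ) * x ^ j)
      Filter.atTop (nhds ((1 - 2 * x) / (1 - x))) := by
  obtain ⟨hx0, hx1⟩ := hx
  have hx2 : 2 * x < 1 := by linarith
  have h1x : 0 ≤ 1 - x := by linarith
  have hbound : Tendsto (fun m : ℕ ↦ 2 * x * (1 - x) / (1 - 2 * x) * (4 * x * (1 - x)) ^ m)
      atTop (𝓝 0) := by
    simpa using (tendsto_pow_atTop_nhds_zero_of_lt_one (by nlinarith) (by nlinarith)).const_mul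
      (2 * x * (1 - x) / (1 - 2 * x))
  have hE₁ := squeeze_zero (fun m ↦ mul_nonneg (pow_nonneg h1x _)
    (negBinomialRemainder_nonneg hx0.le (by linarith) _ _))
    (one_sub_pow_mul_negBinomialRemainder_le hx0.le hx2) hbound
  have hE₂ := squeeze_zero (fun m ↦ mul_nonneg (mul_nonneg hx0.le (pow_nonneg h1x _))
    (negBinomialRemainder_nonneg hx0.le (by linarith) _ _))
    (mul_one_sub_pow_mul_negBinomialRemainder_le hx0.le hx2) hbound
  rw [← tendsto_add_atTop_iff_nat 1]
  convert (tendsto_const_nhds.sub hE₁).add hE₂ using 1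
  · exact funext (one_sub_pow_div_mul_sum_range_succ (by linarith : x < 1).ne)
  · simp
end

section
/- Let 0 < γ < 1 and define the sequence s_j^{(k)} by the recurrence s_j^{(k)} = s_{j-1}^{(k)} + s_j^{(k-1)} with boundary conditions s_0^{(k)} = p_0 (1-γ)^{-k+1} and s_j^{(0)} = (1-p_0) γ^{-j+1}, where p_0 ∈ [0,1]. Then for all j, k ≥ 1, s_j^{(k)} = (1-γ)^{-k} [ (1-p_0) γ^{-j+1} - (γ - p_0) \sum_{k'=0}^{k-1} \binom{j-1+k'}{k'} (1-γ)^{k'} ]. -/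
/-!
Write `x = 1 - γ` and `S m k = ∑_{i<k} C(m+i, i) xⁱ`. Pascal's rule for binomial coefficients
gives `S (m+1) (k+1) = S m (k+1) + x S (m+1) k`, which is exactly the recurrence for the closed
form at `j ≥ 2`. At `j = 1` the recurrence brings in the boundary value `s_0^{(k)}`, and there the
geometric sum `γ S 0 k = 1 - xᵏ` is what makes the closed form fit. The closed form also matches
`s_j^{(0)}`, so induction on `j ≥ 1` and then on `k ≥ 0` identifies it with `s`.
-/

open Finset

section BinomSeries

variable {R : Type*} [CommSemiring R]

def binomSeries (x : R) (m k : ℕ) : R :=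
  ∑ i ∈ range k, ((m + i).choose i : R) * x ^ i

lemma binomSeries_zero_left (x : R) (k : ℕ) : binomSeries x 0 k = ∑ i ∈ range k, x ^ i := by
  simp [binomSeries]

lemma binomSeries_succ_succ (x : R) (m k : ℕ) :
    binomSeries x (m + 1) (k + 1) = binomSeries x m (k + 1) + x * binomSeries x (m + 1) k := by
  have pascal : ∀ i, ((m + 1 + (i + 1)).choose (i + 1) : R)
      = ((m + (i + 1)).choose (i + 1) : R) + ((m + 1 + i).choose i : R) := fun i => by
    rw [show m + 1 + (i + 1) = (m + 1 + i) + 1 by omega, Nat.choose_succ_succ,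
      show m + (i + 1) = m + 1 + i by omega]
    push_cast
    ring
  have shift : ∀ i, ((m + 1 + i).choose i : R) * x ^ (i + 1)
      = x * (((m + 1 + i).choose i : R) * x ^ i) := fun i => by ring
  simp only [binomSeries, sum_range_succ' _ k, pascal, add_mul, sum_add_distrib, shift, ← mul_sum,
    Nat.choose_zero_right]
  ring

end BinomSeries

section ClosedForm

variable {K : Type*} [Field K] (γ p₀ : K)

/-- Meaningful for `j ≥ 1` only: at `j = 0` the truncated `j - 1` repeats the values at `j = 1`. -/
noncomputable def pascalClosedForm (j k : ℕ) : K :=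
  ((1 - γ) ^ k)⁻¹ *
    ((1 - p₀) * (γ ^ (j - 1))⁻¹ - (γ - p₀) * binomSeries (1 - γ) (j - 1) k)

lemma pascalClosedForm_zero_right (j : ℕ) :
    pascalClosedForm γ p₀ j 0 = (1 - p₀) * (γ ^ (j - 1))⁻¹ := by
  simp [pascalClosedForm, binomSeries]

variable {γ}

lemma pascalClosedForm_one_succ (hγ1 : γ ≠ 1) (k : ℕ) :
    pascalClosedForm γ p₀ 1 (k + 1) = p₀ * ((1 - γ) ^ k)⁻¹ + pascalClosedForm γ p₀ 1 k := by
  have hx : 1 - γ ≠ 0 := sub_ne_zero.mpr hγ1.symm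
  have geom : γ * binomSeries (1 - γ) 0 k = 1 - (1 - γ) ^ k := by
    simpa [binomSeries_zero_left] using mul_neg_geom_sum (1 - γ) k
  simp only [pascalClosedForm, Nat.sub_self, pow_zero, inv_one, mul_one, binomSeries_zero_left,
    sum_range_succ] at geom ⊢
  field_simp
  linear_combination -(1 - γ) ^ k * (γ - p₀) * geom

lemma pascalClosedForm_succ_succ (hγ0 : γ ≠ 0) (hγ1 : γ ≠ 1) {j : ℕ} (hj : 1 ≤ j) (k : ℕ) :
    pascalClosedForm γ p₀ (j + 1) (k + 1)
      = pascalClosedForm γ p₀ j (k + 1) + pascalClosedForm γ p₀ (j + 1) k := by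
  have hx : 1 - γ ≠ 0 := sub_ne_zero.mpr hγ1.symm
  obtain ⟨m, rfl⟩ : ∃ m, j = m + 1 := ⟨j - 1, by omega⟩
  simp only [pascalClosedForm, Nat.add_sub_cancel, binomSeries_succ_succ]
  field_simp
  ring

end ClosedForm

theorem stmt_11_general (γ p₀ : ℝ) (hγ : γ ∈ Set.Ioo (0:ℝ) 1)
    (s : ℕ → ℕ → ℝ)
    (hrec : ∀ j k, 1 ≤ j → 1 ≤ k → s j k = s (j - 1) k + s j (k - 1))
    (hb1 : ∀ k, s 0 k = p₀ * ((1 - γ) ^ (k - 1))⁻¹)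
    (hb2 : ∀ j, s j 0 = (1 - p₀) * (γ ^ (j - 1))⁻¹) :
    ∀ j k, 1 ≤ j → 1 ≤ k →
      s j k = ((1 - γ) ^ k)⁻¹ *
        ((1 - p₀) * (γ ^ (j - 1))⁻¹ -
          (γ - p₀) * ∑ k' ∈ Finset.range k, ((j - 1 + k').choose k' : ℝ) * (1 - γ) ^ k') := by
  obtain ⟨hγ0, hγ1⟩ := hγ
  suffices h : ∀ j, 1 ≤ j → ∀ k, s j k = pascalClosedForm γ p₀ j k from
    fun j k hj _ => h j hj k
  intro j hj
  induction j, hj using Nat.le_induction with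
  | base =>
    intro k
    induction k with
    | zero => rw [hb2, pascalClosedForm_zero_right]
    | succ k ih =>
      rw [hrec 1 (k + 1) le_rfl k.succ_pos, Nat.sub_self, hb1, Nat.add_sub_cancel, ih,
        pascalClosedForm_one_succ p₀ hγ1.ne]
  | succ j hj ihj =>
    intro k
    induction k with
    | zero => rw [hb2, pascalClosedForm_zero_right]
    | succ k ih =>
      rw [hrec (j + 1) (k + 1) j.succ_pos k.succ_pos, Nat.add_sub_cancel, Nat.add_sub_cancel, ih,
        ihj, pascalClosedForm_succ_succ p₀ hγ0.ne' hγ1.ne hj]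

theorem stmt_11 (γ p₀ : ℝ) (hγ : γ ∈ Set.Ioo (0:ℝ) 1) (hp₀ : p₀ ∈ Set.Icc (0:ℝ) 1)
    (s : ℕ → ℕ → ℝ)
    (hrec : ∀ j k, 1 ≤ j → 1 ≤ k → s j k = s (j - 1) k + s j (k - 1))
    (hb1 : ∀ k, s 0 k = p₀ * ((1 - γ) ^ (k - 1))⁻¹)
    (hb2 : ∀ j, s j 0 = (1 - p₀) * (γ ^ (j - 1))⁻¹) :
    ∀ j k, 1 ≤ j → 1 ≤ k →
      s j k = ((1 - γ) ^ k)⁻¹ *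
        ((1 - p₀) * (γ ^ (j - 1))⁻¹ -
          (γ - p₀) * ∑ k' ∈ Finset.range k, ((j - 1 + k').choose k' : ℝ) * (1 - γ) ^ k') :=
  stmt_11_general γ p₀ hγ s hrec hb1 hb2
end

section
/- Let γ = 1/(1+e^{-βE}) with β, E > 0, and let p_0 ∈ [0,1]. Define p^{(d)} = \frac{γ}{1-γ}(1-p_0) - \frac{γ-p_0}{1-γ} I_d(1-γ), where I_d(x) = \frac{(1-x)^d}{d} \sum_{j=0}^{d-1}(d-j)\binom{d-1+j}{j}x^j. Then \lim_{d→∞} p^{(d)} = 1 - p_0 e^{-βE}, i.e., the memory-assisted protocol converges to the β-swap output. -/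
/-!
Put `x = 1 - γ`, so `0 < x < 1/2` and `x / (1 - x) = e^{-βE}`. Since
`j * C(d-1+j, j) = d * C(d-1+j, j-1)`, the weighted sum in `I_d(x)` splits into two partial sums
of the negative binomial series `∑ C(n+j, j) x^j = (1-x)^{-(n+1)}`, each truncated after about
`n` terms. By `C(n+j, j) ≤ 2^(n+j)` the neglected tails, rescaled by `(1-x)^(n+1)`, are
`O((4x(1-x))^n)`, which tends to `0` because `x ≠ 1/2`. Hence `I_d(x) → 1 - x/(1-x)`, and the
limit of `p^{(d)}` is a rational identity in `γ`.
-/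

open Filter Finset Topology

lemma hasSum_add_choose_mul_pow {𝕜 : Type*} [NormedField 𝕜] {x : 𝕜} (hx : ‖x‖ < 1) (n : ℕ) :
    HasSum (fun j : ℕ => ((n + j).choose j : 𝕜) * x ^ j) (1 / (1 - x) ^ (n + 1)) := by
  have e (j : ℕ) : (j + n).choose n = (n + j).choose j := by
    rw [Nat.add_comm j n, Nat.choose_symm_add]
  simpa only [e] using hasSum_choose_mul_geometric_of_norm_lt_one n hx

lemma one_sub_pow_mul_sum_range_add_choose_le_one {x : ℝ} (hx0 : 0 ≤ x) (hx1 : x < 1)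
    (n m : ℕ) : (1 - x) ^ (n + 1) * ∑ j ∈ range m, ((n + j).choose j : ℝ) * x ^ j ≤ 1 := by
  have hx : ‖x‖ < 1 := by rwa [Real.norm_of_nonneg hx0]
  have h := sum_le_hasSum (range m) (fun j _ => by positivity) (hasSum_add_choose_mul_pow hx n)
  rwa [le_div_iff₀' (by bound)] at h

lemma one_sub_one_sub_pow_mul_sum_range_add_choose_le {x : ℝ} (hx0 : 0 ≤ x) (hx : 2 * x < 1)
    (n m : ℕ) :
    1 - (1 - x) ^ (n + 1) * ∑ j ∈ range m, ((n + j).choose j : ℝ) * x ^ j ≤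
      (1 - x) ^ (n + 1) * (2 ^ n * (2 * x) ^ m / (1 - 2 * x)) := by
  have hx1 : ‖x‖ < 1 := by rw [Real.norm_of_nonneg hx0]; linarith
  have hf := (hasSum_nat_add_iff' m).mpr (hasSum_add_choose_mul_pow hx1 n)
  have hg := (hasSum_geometric_of_lt_one (by positivity) hx).mul_left (2 ^ n * (2 * x) ^ m)
  rw [← div_eq_mul_inv] at hg
  have htail := hasSum_le (fun j => ?_) hf hg
  · have h1x : 0 < (1 - x) ^ (n + 1) := by bound
    have h := mul_le_mul_of_nonneg_left htail h1x.le
    rw [mul_sub, mul_one_div_cancel h1x.ne'] at h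
    linarith
  calc ((n + (j + m)).choose (j + m) : ℝ) * x ^ (j + m)
      ≤ 2 ^ (n + (j + m)) * x ^ (j + m) := by
        gcongr
        exact_mod_cast Nat.choose_le_two_pow _ _
    _ = 2 ^ n * (2 * x) ^ m * (2 * x) ^ j := by ring

lemma tendsto_one_sub_pow_mul_sum_range_add_choose {x : ℝ} (hx0 : 0 < x) (hx : x < 1 / 2)
    (m : ℕ → ℕ) (c : ℕ) (hm : ∀ n, n ≤ m n + c) :
    Tendsto (fun n => (1 - x) ^ (n + 1) * ∑ j ∈ range (m n), ((n + j).choose j : ℝ) * x ^ j)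
      atTop (𝓝 1) := by
  have h2x : 2 * x < 1 := by linarith
  have h1x : 0 ≤ 1 - x := by linarith
  set C := (1 - x) / (1 - 2 * x) / (2 * x) ^ c
  set r := 2 * (2 * x) * (1 - x)
  have hr : r < 1 := by nlinarith [sq_nonneg (1 - 2 * x)]
  have hC : Tendsto (fun n => 1 - C * r ^ n) atTop (𝓝 1) := by
    have hr0 : 0 ≤ r := mul_nonneg (by positivity) h1x
    simpa using ((tendsto_pow_atTop_nhds_zero_of_lt_one hr0 hr).const_mul C).const_sub 1
  refine tendsto_of_tendsto_of_tendsto_of_le_of_le hC tendsto_const_nhds (fun n => ?_)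
    (fun n => one_sub_pow_mul_sum_range_add_choose_le_one hx0.le (by linarith) _ _)
  have hpow : (2 * x) ^ m n ≤ (2 * x) ^ n / (2 * x) ^ c := by
    rw [le_div_iff₀ (by positivity), ← pow_add]
    exact pow_le_pow_of_le_one (by positivity) h2x.le (hm n)
  have hCr : (1 - x) ^ (n + 1) * (2 ^ n * (2 * x) ^ m n / (1 - 2 * x)) ≤ C * r ^ n :=
    calc _ ≤ (1 - x) ^ (n + 1) * (2 ^ n * ((2 * x) ^ n / (2 * x) ^ c) / (1 - 2 * x)) := by
          gcongr
      _ = C * r ^ n := by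
          simp only [C, r]
          generalize 1 - x = z
          generalize 2 * x = y
          ring
  linarith [one_sub_one_sub_pow_mul_sum_range_add_choose_le hx0.le h2x n (m n)]

lemma sum_range_succ_mul_add_choose_mul_pow {R : Type*} [CommRing R] (n : ℕ) (x : R) :
    ∑ j ∈ range (n + 1), (j : R) * ((n + j).choose j : R) * x ^ j =
      (n + 1) * x * ∑ k ∈ range n, ((n + 1 + k).choose k : R) * x ^ k := by
  rw [sum_range_succ', mul_sum]
  simp only [Nat.cast_zero, zero_mul, add_zero]
  refine sum_congr rfl fun k _ => ?_
  have h := Nat.choose_succ_right_eq (n + 1 + k) k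
  rw [Nat.add_sub_cancel] at h
  have h' := congrArg (Nat.cast : ℕ → R) h
  push_cast at h'
  rw [show n + (k + 1) = n + 1 + k by omega, pow_succ]
  push_cast
  linear_combination (x * x ^ k) * h'

lemma sum_range_succ_sub_mul_add_choose_mul_pow {R : Type*} [CommRing R] (n : ℕ) (x : R) :
    ∑ j ∈ range (n + 1), ((n + 1 - j : ℕ) : R) * ((n + j).choose j : R) * x ^ j =
      (n + 1) * (∑ j ∈ range (n + 1), ((n + j).choose j : R) * x ^ j -
        x * ∑ k ∈ range n, ((n + 1 + k).choose k : R) * x ^ k) := by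
  have h : ∀ j ∈ range (n + 1), ((n + 1 - j : ℕ) : R) * ((n + j).choose j : R) * x ^ j =
      (n + 1) * (((n + j).choose j : R) * x ^ j) - (j : R) * ((n + j).choose j : R) * x ^ j := by
    intro j hj
    rw [Nat.cast_sub (mem_range.mp hj).le]
    push_cast
    ring
  rw [sum_congr rfl h, sum_sub_distrib, ← mul_sum, sum_range_succ_mul_add_choose_mul_pow]
  ring

lemma tendsto_one_sub_pow_div_mul_sum_range_sub_mul_choose {x : ℝ} (hx0 : 0 < x)
    (hx : x < 1 / 2) :
    Tendsto (fun d : ℕ => (1 - x) ^ d / (d : ℝ) *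
        ∑ j ∈ range d, ((d - j : ℕ) : ℝ) * ((d - 1 + j).choose j : ℝ) * x ^ j)
      atTop (𝓝 (1 - x / (1 - x))) := by
  have h1x : 1 - x ≠ 0 := by linarith
  have hA := tendsto_one_sub_pow_mul_sum_range_add_choose hx0 hx (· + 1) 0 (by intro n; omega)
  have hB := (tendsto_one_sub_pow_mul_sum_range_add_choose hx0 hx (· - 1) 1
    (by intro n; omega)).comp (tendsto_add_atTop_nat 1)
  rw [← tendsto_add_atTop_iff_nat 1]
  convert hA.sub (hB.const_mul (x / (1 - x))) using 2 with n
  · simp only [Function.comp_apply, Nat.add_sub_cancel, sum_range_succ_sub_mul_add_choose_mul_pow]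
    push_cast
    field_simp
    ring
  · ring

theorem stmt_12_general (β E : ℝ) (hβ : 0 < β) (hE : 0 < E) (p₀ : ℝ)
    (γ : ℝ) (hγ : γ = 1 / (1 + Real.exp (-β * E))) :
    Filter.Tendsto
      (fun d : ℕ =>
        γ / (1 - γ) * (1 - p₀) -
          (γ - p₀) / (1 - γ) *
            ((1 - (1 - γ)) ^ d / (d : ℝ) *
              ∑ j ∈ Finset.range d,
                ((d - j : ℕ) : ℝ) * ((d - 1 + j).choose j : ℝ) * (1 - γ) ^ j))
      Filter.atTop (nhds (1 - p₀ * Real.exp (-β * E))) := by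
  set t := Real.exp (-β * E)
  have ht0 : 0 < t := Real.exp_pos _
  have ht1 : t < 1 := Real.exp_lt_one_iff.mpr (by rw [neg_mul, neg_lt_zero]; exact mul_pos hβ hE)
  have hx : 1 - γ = t / (1 + t) := by rw [hγ]; field_simp; ring
  have hx0 : 0 < 1 - γ := by rw [hx]; positivity
  have hx1 : 1 - γ < 1 / 2 := by rw [hx, div_lt_iff₀ (by positivity)]; linarith
  convert ((tendsto_one_sub_pow_div_mul_sum_range_sub_mul_choose hx0 hx1).const_mul
    ((γ - p₀) / (1 - γ))).const_sub (γ / (1 - γ) * (1 - p₀)) using 2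
  rw [hγ]
  field_simp [ht0.ne']
  ring

theorem stmt_12 (β E : ℝ) (hβ : 0 < β) (hE : 0 < E) (p₀ : ℝ) (hp₀ : p₀ ∈ Set.Icc (0:ℝ) 1)
    (γ : ℝ) (hγ : γ = 1 / (1 + Real.exp (-β * E))) :
    Filter.Tendsto
      (fun d : ℕ =>
        γ / (1 - γ) * (1 - p₀) -
          (γ - p₀) / (1 - γ) *
            ((1 - (1 - γ)) ^ d / (d : ℝ) *
              ∑ j ∈ Finset.range d,
                ((d - j : ℕ) : ℝ) * ((d - 1 + j).choose j : ℝ) * (1 - γ) ^ j))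
      Filter.atTop (nhds (1 - p₀ * Real.exp (-β * E))) :=
  stmt_12_general β E hβ hE p₀ γ hγ
end

section
/- Let β, E > 0 and γ = 1/(1+e^{-βE}). Under coherent-control cooling via thermal processes (each round: population swap then β-swap), the ground-state population p_n after n rounds satisfies the recursion p_n = 1 - (1-p_{n-1}) e^{-βE} with p_0 = γ, whose solution is p_n = 1 - (1-γ) e^{-nβE}. -/
theorem stmt_14 (β E : ℝ) (hβ : 0 < β) (hE : 0 < E)
    (γ : ℝ) (hγ : γ = 1 / (1 + Real.exp (-β * E)))
    (p : ℕ → ℝ) (h0 : p 0 = γ)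
    (hrec : ∀ n, 1 ≤ n → p n = 1 - (1 - p (n - 1)) * Real.exp (-β * E)) :
    ∀ n : ℕ, p n = 1 - (1 - γ) * Real.exp (-(n : ℝ) * β * E) := by
  intro n
  induction n with
  | zero => simp [h0]
  | succ k ih =>
    rw [hrec (k+1) (by omega)]
    simp only [Nat.add_sub_cancel, ih]
    push_cast
    rw [show (-(↑k+1)*β*E) = -↑k*β*E + -β*E by ring, Real.exp_add]
    ring
end

section
/- Define I_d(x,y) = \frac{(1-x)^d (1-y)^d}{d} \sum_{j=0}^{d-1} \sum_{k=0}^{d-j-1} (d-j-k) \binom{d-1+k}{k} x^k \binom{d-1+j}{j} y^j for x, y ∈ (0,1). If \frac{x}{1-x} + \frac{y}{1-y} < 1, then \lim_{d→∞} I_d(x,y) = 1 - \frac{x}{1-x} - \frac{y}{1-y}; if \frac{x}{1-x} + \frac{y}{1-y} ≥ 1, then \lim_{d→∞} I_d(x,y) = 0. -/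
/-!
With `d = e + 1`, the prefactor `(1 - x)^d (1 - y)^d` turns the double sum into an expectation:
`I_d(x, y) = E[(1 - (J + K) / d)⁺]` for independent negative binomial variables `J`, `K` with `d`
successes and failure probabilities `y`, `x`. The mean of `K / d` is `x / (1 - x)` and its variance
is `O(1 / d)`, so by Cauchy–Schwarz `K / d → x / (1 - x)` in `L¹`, and likewise `J / d`. Since
`t ↦ t⁺` is `1`-Lipschitz, `I_d(x, y) → (1 - x / (1 - x) - y / (1 - y))⁺`.
-/

open Filter Finset Topology

theorem summable_abs_mul_and_tsum_le_sqrt {ι : Type*} {p f : ι → ℝ} {v : ℝ}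
    (hp₀ : ∀ i, 0 ≤ p i) (hp : HasSum p 1) (hv : HasSum (fun i => f i ^ 2 * p i) v) :
    Summable (fun i => |f i| * p i) ∧ ∑' i, |f i| * p i ≤ √v := by
  have hv₀ : 0 ≤ v := hv.nonneg fun i => mul_nonneg (sq_nonneg _) (hp₀ i)
  -- Cauchy–Schwarz for `|f| * √p` and `√p`
  obtain ⟨C, -, hCv, hC⟩ := Real.inner_le_Lp_mul_Lq_hasSum_of_nonneg .two_two
    (Real.sqrt_nonneg v) zero_le_one (f := fun i => |f i| * √(p i)) (g := fun i => √(p i))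
    (fun i => by positivity) (fun i => by positivity)
    (by simpa [Real.rpow_two, mul_pow, Real.sq_sqrt (hp₀ _), Real.sq_sqrt hv₀] using hv)
    (by simpa [Real.rpow_two, Real.sq_sqrt (hp₀ _)] using hp)
  simp only [mul_assoc, Real.mul_self_sqrt (hp₀ _), mul_one] at hC hCv
  exact ⟨hC.summable, hC.tsum_eq ▸ hCv⟩

theorem abs_tsum_mul_mul_sub_le {α β : Type*} {p : α → ℝ} {q : β → ℝ} {F : α → ℝ} {G : β → ℝ}
    {g : α × β → ℝ} {L : ℝ} (hp₀ : ∀ a, 0 ≤ p a) (hp : HasSum p 1) (hq₀ : ∀ b, 0 ≤ q b)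
    (hq : HasSum q 1) (hF₀ : ∀ a, 0 ≤ F a) (hF : Summable fun a => F a * p a)
    (hG₀ : ∀ b, 0 ≤ G b) (hG : Summable fun b => G b * q b)
    (hg : ∀ a b, |g (a, b) - L| ≤ F a + G b) :
    |∑' ab : α × β, p ab.1 * q ab.2 * g ab - L| ≤ ∑' a, F a * p a + ∑' b, G b * q b := by
  set w : α × β → ℝ := fun ab => p ab.1 * q ab.2
  have hw₀ : ∀ ab, 0 ≤ w ab := fun ab => mul_nonneg (hp₀ _) (hq₀ _)
  have hw : HasSum w 1 := by
    simpa using hp.mul hq (hp.summable.mul_of_nonneg hq.summable hp₀ hq₀)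
  have hFG : HasSum (fun ab => w ab * (F ab.1 + G ab.2)) (∑' a, F a * p a + ∑' b, G b * q b) := by
    have hFq := hF.hasSum.mul hq
      (hF.mul_of_nonneg hq.summable (fun a => mul_nonneg (hF₀ a) (hp₀ a)) hq₀)
    have hpG := hp.mul hG.hasSum
      (hp.summable.mul_of_nonneg hG hp₀ fun b => mul_nonneg (hG₀ b) (hq₀ b))
    rw [mul_one] at hFq
    rw [one_mul] at hpG
    exact (hFq.add hpG).congr_fun fun ab => by ring
  have hbound : ∀ ab, ‖w ab * (g ab - L)‖ ≤ w ab * (F ab.1 + G ab.2) := fun ab => by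
    rw [Real.norm_eq_abs, abs_mul, abs_of_nonneg (hw₀ ab)]
    exact mul_le_mul_of_nonneg_left (hg ab.1 ab.2) (hw₀ ab)
  have hs : Summable fun ab => w ab * (g ab - L) := .of_norm_bounded hFG.summable hbound
  have hsplit : ∑' ab, w ab * g ab = ∑' ab, w ab * (g ab - L) + L := by
    have := (hs.hasSum.add (hw.mul_left L)).congr_fun (g := fun ab => w ab * g ab) fun ab => by ring
    rw [this.tsum_eq, mul_one]
  rw [hsplit, add_sub_cancel_right, ← Real.norm_eq_abs]
  exact tsum_of_norm_bounded hFG hbound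

theorem natCast_sub_eq_max {R : Type*} [Ring R] [LinearOrder R] [IsStrictOrderedRing R] (m n : ℕ) :
    ((m - n : ℕ) : R) = max ((m : R) - n) 0 := by
  rcases le_total n m with h | h
  · rw [Nat.cast_sub h, max_eq_left (sub_nonneg.2 (by exact_mod_cast h))]
  · rw [Nat.sub_eq_zero_of_le h, Nat.cast_zero, max_eq_right (sub_nonpos.2 (by exact_mod_cast h))]

theorem abs_natSub_div_sub_max_le {n : ℕ} (hn : 0 < n) (j k : ℕ) (a b : ℝ) :
    |((n - j - k : ℕ) : ℝ) / n - max (1 - a - b) 0| ≤ |(j : ℝ) / n - a| + |(k : ℝ) / n - b| := by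
  have hn' : (0 : ℝ) < n := by exact_mod_cast hn
  rw [Nat.sub_sub, natCast_sub_eq_max, ← max_div_div_right hn'.le, zero_div, Nat.cast_add]
  calc _ ≤ |((n : ℝ) - (j + k)) / n - (1 - a - b)| := abs_max_sub_max_le_abs _ _ _
    _ = |(a - j / n) + (b - k / n)| := by congr 1; field_simp; ring
    _ ≤ _ := (abs_add_le _ _).trans_eq (by rw [abs_sub_comm a, abs_sub_comm b])

/-- The negative binomial law of the number of failures before the `(e + 1)`-st success, failure
probability `x`; the paper's dimension `d` is `e + 1`. -/
noncomputable def negBinomial (x : ℝ) (e k : ℕ) : ℝ :=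
  (e + k).choose k * x ^ k * (1 - x) ^ (e + 1)

namespace negBinomial

variable {x : ℝ}

lemma nonneg (hx₀ : 0 ≤ x) (hx₁ : x ≤ 1) (e k : ℕ) : 0 ≤ negBinomial x e k := by
  have : 0 ≤ 1 - x := sub_nonneg.2 hx₁
  unfold negBinomial
  positivity

lemma hasSum_one (hx : |x| < 1) (e : ℕ) : HasSum (negBinomial x e) 1 := by
  have hx₁ : 1 - x ≠ 0 := by linarith [le_abs_self x]
  have h :=
    (hasSum_choose_mul_geometric_of_norm_lt_one (𝕜 := ℝ) e hx).mul_right ((1 - x) ^ (e + 1))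
  rw [one_div_mul_cancel (pow_ne_zero _ hx₁)] at h
  refine h.congr_fun fun k => ?_
  rw [negBinomial, add_comm e k, Nat.choose_symm_add]

lemma succ_mul_succ (hx : x ≠ 1) (e k : ℕ) :
    (k + 1) * negBinomial x e (k + 1) = (e + 1) * (x / (1 - x)) * negBinomial x (e + 1) k := by
  have hchoose : ((e + (k + 1)).choose (k + 1) : ℝ) * (k + 1) = (e + 1 + k).choose k * (e + 1) := by
    have := Nat.choose_succ_right_eq (e + 1 + k) k
    rw [show e + 1 + k - k = e + 1 by omega, show e + 1 + k = e + (k + 1) by omega] at this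
    rw [show e + 1 + k = e + (k + 1) by omega]
    exact_mod_cast this
  have hx₁ : 1 - x ≠ 0 := sub_ne_zero.2 hx.symm
  unfold negBinomial
  field_simp
  linear_combination x ^ (k + 1) * (1 - x) ^ (e + 2) * hchoose

lemma hasSum_mul (hx : |x| < 1) (e : ℕ) :
    HasSum (fun k : ℕ => k * negBinomial x e k) ((e + 1) * (x / (1 - x))) := by
  have hx₁ : x ≠ 1 := by rintro rfl; simp at hx
  have h := (hasSum_one hx (e + 1)).mul_left ((e + 1) * (x / (1 - x)))
  rw [mul_one] at h
  rw [← hasSum_nat_add_iff' 1, sum_range_one, Nat.cast_zero, zero_mul, sub_zero]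
  refine h.congr_fun fun k => ?_
  push_cast
  exact succ_mul_succ hx₁ e k

lemma hasSum_mul_sub_one_mul (hx : |x| < 1) (e : ℕ) :
    HasSum (fun k : ℕ => k * (k - 1) * negBinomial x e k)
      ((e + 1) * (e + 2) * (x / (1 - x)) ^ 2) := by
  have hx₁ : x ≠ 1 := by rintro rfl; simp at hx
  have h := (hasSum_mul hx (e + 1)).mul_left ((e + 1) * (x / (1 - x)))
  rw [← hasSum_nat_add_iff' 1, sum_range_one, Nat.cast_zero, zero_mul, zero_mul, sub_zero]
  rw [show ((e : ℝ) + 1) * (e + 2) * (x / (1 - x)) ^ 2 =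
      (e + 1) * (x / (1 - x)) * ((((e + 1 : ℕ) : ℝ) + 1) * (x / (1 - x))) by push_cast; ring]
  refine h.congr_fun fun k => ?_
  rw [mul_left_comm, ← succ_mul_succ hx₁]
  push_cast
  ring

lemma hasSum_sq_sub_mul (hx : |x| < 1) (e : ℕ) :
    HasSum (fun k : ℕ => ((k : ℝ) / (e + 1) - x / (1 - x)) ^ 2 * negBinomial x e k)
      ((x / (1 - x) + (x / (1 - x)) ^ 2) / (e + 1)) := by
  have h₂ := hasSum_mul_sub_one_mul hx e
  have h₁ := hasSum_mul hx e
  have h₀ := hasSum_one hx e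
  generalize x / (1 - x) = r at h₀ h₁ h₂ ⊢
  have hn : (e : ℝ) + 1 ≠ 0 := by positivity
  have h := (h₂.mul_left (1 / ((e : ℝ) + 1) ^ 2)).add
    ((h₁.mul_left (1 / ((e : ℝ) + 1) ^ 2 - 2 * r / (e + 1))).add (h₀.mul_left (r ^ 2)))
  rw [show (r + r ^ 2) / (e + 1) = 1 / ((e : ℝ) + 1) ^ 2 * ((e + 1) * (e + 2) * r ^ 2) +
      ((1 / ((e : ℝ) + 1) ^ 2 - 2 * r / (e + 1)) * ((e + 1) * r) + r ^ 2 * 1) by field_simp; ring]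
  refine h.congr_fun fun k => ?_
  field_simp
  ring

lemma tendsto_tsum_abs_sub_mul (hx₀ : 0 ≤ x) (hx₁ : x < 1) :
    Tendsto (fun e : ℕ => ∑' k : ℕ, |(k : ℝ) / (e + 1) - x / (1 - x)| * negBinomial x e k)
      atTop (𝓝 0) := by
  have hx : |x| < 1 := abs_lt.2 ⟨by linarith, hx₁⟩
  set c := x / (1 - x) + (x / (1 - x)) ^ 2
  have hbound : Tendsto (fun e : ℕ => √(c / (e + 1))) atTop (𝓝 0) := by
    have := (tendsto_one_div_add_atTop_nhds_zero_nat.const_mul c).sqrt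
    rw [mul_zero, Real.sqrt_zero] at this
    exact this.congr fun e => by rw [mul_one_div]
  refine squeeze_zero (fun e => tsum_nonneg fun k => ?_) (fun e => ?_) hbound
  · exact mul_nonneg (abs_nonneg _) (nonneg hx₀ hx₁.le e k)
  · exact (summable_abs_mul_and_tsum_le_sqrt (nonneg hx₀ hx₁.le e) (hasSum_one hx e)
      (hasSum_sq_sub_mul hx e)).2

end negBinomial

theorem tendsto_tsum_negBinomial_mul_negBinomial {x y : ℝ} (hx₀ : 0 ≤ x) (hx₁ : x < 1)
    (hy₀ : 0 ≤ y) (hy₁ : y < 1) :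
    Tendsto (fun e : ℕ => ∑' jk : ℕ × ℕ, negBinomial y e jk.1 * negBinomial x e jk.2 *
        (((e + 1 - jk.1 - jk.2 : ℕ) : ℝ) / (e + 1)))
      atTop (𝓝 (max (1 - y / (1 - y) - x / (1 - x)) 0)) := by
  have hlln := (negBinomial.tendsto_tsum_abs_sub_mul hy₀ hy₁).add
    (negBinomial.tendsto_tsum_abs_sub_mul hx₀ hx₁)
  rw [add_zero] at hlln
  rw [tendsto_iff_norm_sub_tendsto_zero]
  refine squeeze_zero (fun e => norm_nonneg _) (fun e => ?_) hlln
  have hx : |x| < 1 := abs_lt.2 ⟨by linarith, hx₁⟩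
  have hy : |y| < 1 := abs_lt.2 ⟨by linarith, hy₁⟩
  have hsq {z : ℝ} (hz : |z| < 1) := negBinomial.hasSum_sq_sub_mul hz e
  have h₀ {z : ℝ} (hz₀ : 0 ≤ z) (hz₁ : z < 1) := negBinomial.nonneg hz₀ hz₁.le e
  refine abs_tsum_mul_mul_sub_le (h₀ hy₀ hy₁) (negBinomial.hasSum_one hy e) (h₀ hx₀ hx₁)
    (negBinomial.hasSum_one hx e) (fun _ => abs_nonneg _)
    (summable_abs_mul_and_tsum_le_sqrt (h₀ hy₀ hy₁) (negBinomial.hasSum_one hy e) (hsq hy)).1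
    (fun _ => abs_nonneg _)
    (summable_abs_mul_and_tsum_le_sqrt (h₀ hx₀ hx₁) (negBinomial.hasSum_one hx e) (hsq hx)).1
    fun j k => ?_
  simpa using abs_natSub_div_sub_max_le (Nat.succ_pos e) j k (y / (1 - y)) (x / (1 - x))

theorem tsum_negBinomial_mul_negBinomial_eq_sum (x y : ℝ) (e : ℕ) :
    ∑' jk : ℕ × ℕ, negBinomial y e jk.1 * negBinomial x e jk.2 *
        (((e + 1 - jk.1 - jk.2 : ℕ) : ℝ) / (e + 1)) =
      (1 - x) ^ (e + 1) * (1 - y) ^ (e + 1) / ((e + 1 : ℕ) : ℝ) *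
        ∑ j ∈ range (e + 1), ∑ k ∈ range (e + 1 - j),
          ((e + 1 - j - k : ℕ) : ℝ) * ((e + k).choose k : ℝ) * x ^ k *
            ((e + j).choose j : ℝ) * y ^ j := by
  have hvanish (j k : ℕ) (h : e + 1 ≤ j + k) : ((e + 1 - j - k : ℕ) : ℝ) = 0 := by
    rw [Nat.sub_sub, Nat.sub_eq_zero_of_le h, Nat.cast_zero]
  rw [tsum_eq_sum (s := range (e + 1) ×ˢ range (e + 1)), sum_product, mul_sum]
  · refine sum_congr rfl fun j _ => ?_
    rw [mul_sum, ← sum_subset (range_subset_range.2 (Nat.sub_le (e + 1) j))]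
    · refine sum_congr rfl fun k _ => ?_
      rw [negBinomial, negBinomial]
      push_cast
      ring
    · intro k _ hk
      rw [mem_range, not_lt] at hk
      rw [hvanish j k (by omega), zero_div, mul_zero]
  · rintro ⟨j, k⟩ hjk
    rw [mem_product, mem_range, mem_range] at hjk
    rw [hvanish j k (by omega), zero_div, mul_zero]

theorem stmt_19 (x y : ℝ) (hx : x ∈ Set.Ioo (0:ℝ) 1) (hy : y ∈ Set.Ioo (0:ℝ) 1)
    (I : ℕ → ℝ)
    (hI : ∀ d, 1 ≤ d → I d =
      (1 - x) ^ d * (1 - y) ^ d / (d : ℝ) *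
        ∑ j ∈ Finset.range d, ∑ k ∈ Finset.range (d - j),
          ((d - j - k : ℕ) : ℝ) * ((d - 1 + k).choose k : ℝ) * x ^ k *
            ((d - 1 + j).choose j : ℝ) * y ^ j) :
    (x / (1 - x) + y / (1 - y) < 1 →
        Filter.Tendsto I Filter.atTop (nhds (1 - x / (1 - x) - y / (1 - y)))) ∧
    (1 ≤ x / (1 - x) + y / (1 - y) →
        Filter.Tendsto I Filter.atTop (nhds 0)) := by
  obtain ⟨hx₀, hx₁⟩ := hx
  obtain ⟨hy₀, hy₁⟩ := hy
  have hlim : Tendsto I atTop (𝓝 (max (1 - x / (1 - x) - y / (1 - y)) 0)) := by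
    rw [← tendsto_add_atTop_iff_nat 1, sub_right_comm]
    refine (tendsto_tsum_negBinomial_mul_negBinomial hx₀.le hx₁ hy₀.le hy₁).congr fun e => ?_
    rw [hI (e + 1) (Nat.le_add_left 1 e), Nat.add_sub_cancel,
      tsum_negBinomial_mul_negBinomial_eq_sum]
  constructor
  · intro h
    rwa [max_eq_left (by linarith)] at hlim
  · intro h
    rwa [max_eq_right (by linarith)] at hlim
end
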